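/- Let a < b be real, let (z_n) be complex numbers, and let H be a positive integer. Then |Σ_{a < n < b} z_n|² ≤ ( 1 + (b−a)/H ) Σ_{|h| < H} ( 1 − |h|/H ) Σ_{a < n, n+h < b} z_{n+h} · conj(z_n), where the outer sum on the right is over integers h with |h| < H and the inner sum is over integers n with a < n < b and a < n + h < b. -/

import Mathlib

/-!
Average over shifts. With `w` the restriction of `z` to the summation range,
`H * Σ_n w n = Σ_p Σ_{r<H} w (p + r)`, where `p` runs over an interval of at most `H + (b - a)`
integers. Cauchy–Schwarz over `p` bounds `H² ‖Σ_n w n‖²` by that length times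
`Σ_p ‖Σ_{r<H} w (p + r)‖²`; expanding the square, the pair `(r, s)` contributes the
correlation of `w` at lag `r - s`, and each lag `h` arises from `H - |h|` pairs.
-/

open Finset ComplexConjugate

theorem sum_Ioo_add_eq_of_eq_zero {M : Type*} [AddCommMonoid M] {A B : ℤ} {g : ℤ → M}
    (hg : ∀ n ∉ Ioo A B, g n = 0) {H s : ℕ} (hs : s < H) :
    ∑ p ∈ Ioo (A + 1 - H) B, g (p + s) = ∑ n ∈ Ioo A B, g n := by
  have : ∑ p ∈ Ioo (A + 1 - H) B, g (p + s) = ∑ n ∈ Ioo (A + 1 - H + s) (B + s), g n := by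
    rw [← map_add_right_Ioo, sum_map]
    rfl
  rw [this]
  refine (sum_subset (fun n hn => ?_) fun n _ hn => hg n hn).symm
  simp only [mem_Ioo] at hn ⊢
  omega

theorem card_filter_range_product_sub_eq (H : ℕ) (h : ℤ) :
    #{rs ∈ range H ×ˢ range H | (rs.1 : ℤ) - rs.2 = h} = H - h.natAbs := by
  have : {rs ∈ range H ×ˢ range H | (rs.1 : ℤ) - rs.2 = h}
      = (range (H - h.natAbs)).image fun k => (k + h.toNat, k + (-h).toNat) := by
    ext ⟨r, s⟩
    simp only [mem_filter, mem_product, mem_range, mem_image, Prod.mk.injEq]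
    constructor
    · rintro ⟨⟨hr, hs⟩, hd⟩
      exact ⟨r - h.toNat, by omega, by omega, by omega⟩
    · rintro ⟨k, hk, rfl, rfl⟩
      omega
  rw [this, card_image_of_injective _ fun x y hxy => by simp only [Prod.mk.injEq] at hxy; omega,
    card_range]

theorem norm_sum_sq_le_card_mul_sum_norm_sq {ι E : Type*} [SeminormedAddCommGroup E]
    (s : Finset ι) (f : ι → E) : ‖∑ i ∈ s, f i‖ ^ 2 ≤ #s * ∑ i ∈ s, ‖f i‖ ^ 2 :=
  (pow_le_pow_left₀ (norm_nonneg _) (norm_sum_le s f) 2).trans (sq_sum_le_card_mul_sum_sq ..)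

theorem card_Ioo_floor_ceil_le {a b : ℝ} (hab : a ≤ b) : (#(Ioo ⌊a⌋ ⌈b⌉) : ℝ) ≤ b - a + 1 := by
  have hb := Int.ceil_lt_add_one b
  have ha := Int.sub_one_lt_floor a
  rw [Int.card_Ioo, ← Int.cast_natCast, Int.toNat_eq_max, Int.cast_max]
  push_cast
  exact max_le (by linarith) (by linarith)

theorem sum_indicator_mul_conj_indicator (I : Finset ℤ) (z : ℤ → ℂ) (h : ℤ) :
    ∑ n ∈ I, (I : Set ℤ).indicator z (n + h) * conj ((I : Set ℤ).indicator z n) =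
      ∑ n ∈ I with n + h ∈ I, z (n + h) * conj (z n) := by
  rw [sum_filter]
  refine sum_congr rfl fun n hn => ?_
  simp only [Set.indicator, mem_coe, if_pos hn]
  split_ifs <;> simp

section Window

variable {A B : ℤ} {w : ℤ → ℂ} (hw : ∀ n ∉ Ioo A B, w n = 0) (H : ℕ)
include hw

theorem sum_sum_range_add_eq :
    ∑ p ∈ Ioo (A + 1 - H) B, ∑ r ∈ range H, w (p + r) = H * ∑ n ∈ Ioo A B, w n := by
  rw [sum_comm, sum_congr rfl fun r hr => sum_Ioo_add_eq_of_eq_zero hw (mem_range.mp hr),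
    sum_const, card_range, nsmul_eq_mul]

theorem sum_mul_conj_add_eq (r : ℕ) {s : ℕ} (hs : s < H) :
    ∑ p ∈ Ioo (A + 1 - H) B, w (p + r) * conj (w (p + s)) =
      ∑ n ∈ Ioo A B, w (n + (r - s : ℤ)) * conj (w n) := by
  rw [← sum_Ioo_add_eq_of_eq_zero (g := fun n => w (n + (r - s : ℤ)) * conj (w n))
    (fun n hn => by simp [hw n hn]) hs]
  simp only [add_add_sub_cancel]

theorem sum_norm_sum_range_add_sq :
    ∑ p ∈ Ioo (A + 1 - H) B, ‖∑ r ∈ range H, w (p + r)‖ ^ 2 =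
      ∑ h ∈ Ioo (-(H : ℤ)) H, ((H : ℝ) - |(h : ℝ)|) *
        (∑ n ∈ Ioo A B, w (n + h) * conj (w n)).re := by
  set C : ℤ → ℂ := fun h => ∑ n ∈ Ioo A B, w (n + h) * conj (w n)
  have hmaps : ∀ rs ∈ range H ×ˢ range H, (rs.1 : ℤ) - rs.2 ∈ Ioo (-(H : ℤ)) H := by
    simp only [mem_product, mem_range, mem_Ioo]
    omega
  calc ∑ p ∈ Ioo (A + 1 - H) B, ‖∑ r ∈ range H, w (p + r)‖ ^ 2
      = (∑ p ∈ Ioo (A + 1 - H) B,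
          (∑ r ∈ range H, w (p + r)) * conj (∑ s ∈ range H, w (p + s))).re := by
        simp only [RCLike.mul_conj, Complex.re_sum]
        norm_cast
    _ = (∑ rs ∈ range H ×ˢ range H, C (rs.1 - rs.2)).re := by
        rw [sum_product]
        simp only [map_sum, sum_mul_sum]
        rw [sum_comm]
        refine congrArg _ (sum_congr rfl fun r _ => ?_)
        rw [sum_comm]
        exact sum_congr rfl fun s hs => sum_mul_conj_add_eq hw H r (mem_range.mp hs)
    _ = ∑ h ∈ Ioo (-(H : ℤ)) H, ((H : ℝ) - |(h : ℝ)|) * (C h).re := by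
        rw [← sum_fiberwise_of_maps_to' hmaps C, Complex.re_sum]
        refine sum_congr rfl fun h hh => ?_
        have : h.natAbs ≤ H := by simp only [mem_Ioo] at hh; omega
        rw [sum_const, card_filter_range_product_sub_eq, nsmul_eq_mul, Nat.cast_sub this,
          Nat.cast_natAbs]
        exact_mod_cast Complex.re_ofReal_mul _ _

theorem sq_mul_norm_sum_sq_le :
    (H : ℝ) ^ 2 * ‖∑ n ∈ Ioo A B, w n‖ ^ 2 ≤
      #(Ioo (A + 1 - H) B) * ∑ h ∈ Ioo (-(H : ℤ)) H, ((H : ℝ) - |(h : ℝ)|) *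
        (∑ n ∈ Ioo A B, w (n + h) * conj (w n)).re :=
  calc (H : ℝ) ^ 2 * ‖∑ n ∈ Ioo A B, w n‖ ^ 2
      = ‖∑ p ∈ Ioo (A + 1 - H) B, ∑ r ∈ range H, w (p + r)‖ ^ 2 := by
        rw [sum_sum_range_add_eq hw, norm_mul, Complex.norm_natCast, mul_pow]
    _ ≤ _ := norm_sum_sq_le_card_mul_sum_norm_sq ..
    _ = _ := by rw [sum_norm_sum_range_add_sq hw]

end Window

/-- **Van der Corput's inequality.**
For `a < b`, complex numbers `(z_n)` and a positive integer `H`,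
`|Σ_{a<n<b} z_n|² ≤ (1 + (b−a)/H) Σ_{|h|<H} (1 − |h|/H) Σ_{a<n, n+h<b} z_{n+h} conj(z_n)`
(the right-hand side is real, and we take its real part). -/
theorem van_der_corput_inequality
    (a b : ℝ) (hab : a < b) (z : ℤ → ℂ) (H : ℕ) (hH : 0 < H) :
    ‖∑ n ∈ Finset.Ioo ⌊a⌋ ⌈b⌉, z n‖ ^ 2 ≤
      (1 + (b - a) / H) *
        (∑ h ∈ Finset.Ioo (-(H : ℤ)) (H : ℤ),
          (((1 - |(h : ℝ)| / H) : ℝ) : ℂ) *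
            ∑ n ∈ (Finset.Ioo ⌊a⌋ ⌈b⌉).filter (fun n : ℤ => n + h ∈ Finset.Ioo ⌊a⌋ ⌈b⌉),
              z (n + h) * (starRingEnd ℂ) (z n)).re := by
  set I := Ioo ⌊a⌋ ⌈b⌉
  have hw : ∀ n ∉ I, (I : Set ℤ).indicator z n = 0 := fun n hn => Set.indicator_of_notMem hn z
  set Q := ∑ h ∈ Ioo (-(H : ℤ)) H, ((H : ℝ) - |(h : ℝ)|) *
    (∑ n ∈ I, (I : Set ℤ).indicator z (n + h) * conj ((I : Set ℤ).indicator z n)).re with hQdef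
  have hQ0 : 0 ≤ Q := by
    rw [hQdef, ← sum_norm_sum_range_add_sq hw H]
    positivity
  have hQ : Q = H * (∑ h ∈ Ioo (-(H : ℤ)) H, (((1 - |(h : ℝ)| / H) : ℝ) : ℂ) *
      ∑ n ∈ I with n + h ∈ I, z (n + h) * conj (z n)).re := by
    rw [hQdef, Complex.re_sum, mul_sum]
    refine sum_congr rfl fun h _ => ?_
    rw [← sum_indicator_mul_conj_indicator, Complex.re_ofReal_mul]
    field_simp
  have hcard : (#(Ioo (⌊a⌋ + 1 - H) ⌈b⌉) : ℝ) ≤ H + (b - a) := by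
    have := card_Ioo_floor_ceil_le (a := a + 1 - H) (b := b)
      (by linarith [show (1 : ℝ) ≤ H by exact_mod_cast hH])
    rw [Int.floor_sub_natCast, Int.floor_add_one] at this
    linarith
  have key : (H : ℝ) ^ 2 * ‖∑ n ∈ I, z n‖ ^ 2 ≤ (H + (b - a)) * Q := by
    rw [← sum_indicator_subset z subset_rfl]
    exact (sq_mul_norm_sum_sq_le hw H).trans (mul_le_mul_of_nonneg_right hcard hQ0)
  refine le_of_mul_le_mul_left (key.trans_eq ?_) (by positivity : (0 : ℝ) < H ^ 2)
  rw [hQ]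
  field_simp
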